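/- arXiv:2202.01589 — 6 statements merged into one kernel-verified Lean document; each statement's English description precedes it below -/
import Mathlib

section
/- The functional J attains its minimum over H at a unique point; i.e., there exists a unique u₀* ∈ H such that J(u₀*) ≤ J(u₀) for all u₀ ∈ H. -/
open MeasureTheory

/-- The cost functional `J(u₀) = ½‖ℒu₀ − u_T‖² + (τ/2)‖u₀‖² + β∫|u₀| dμ` on `H = L²(μ; ℝ)`. -/
noncomputable def J {X : Type*} [MeasurableSpace X] (μ : Measure X)
    (L : Lp ℝ 2 μ →L[ℝ] Lp ℝ 2 μ) (uT : Lp ℝ 2 μ) (τ β : ℝ) (u₀ : Lp ℝ 2 μ) : ℝ :=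
  (1 / 2) * ‖L u₀ - uT‖ ^ 2 + (τ / 2) * ‖u₀‖ ^ 2 + β * ∫ x, |u₀ x| ∂μ

/-- Abstract lemma: a continuous, bounded-below, uniformly convex (along midpoints)
functional on a complete normed space has a unique minimizer. -/
theorem aux_exists_unique_min {E : Type*} [NormedAddCommGroup E] [NormedSpace ℝ E]
    [CompleteSpace E] (f : E → ℝ) (hc : Continuous f) (hb : ∀ x, 0 ≤ f x)
    (c : ℝ) (hcpos : 0 < c)
    (hmid : ∀ u v : E, f ((2:ℝ)⁻¹ • (u + v)) ≤ f u / 2 + f v / 2 - c * ‖u - v‖ ^ 2) :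
    ∃! x : E, ∀ y, f x ≤ f y := by
  have hbdd : BddBelow (Set.range f) := ⟨0, by rintro _ ⟨x, rfl⟩; exact hb x⟩
  set m := ⨅ x, f x with hm
  have hmle : ∀ x, m ≤ f x := fun x => ciInf_le hbdd x
  have hseq : ∀ n : ℕ, ∃ x : E, f x < m + 1 / (n + 1) := by
    intro n
    apply exists_lt_of_ciInf_lt
    have h1 : (0:ℝ) < 1 / ((n:ℝ) + 1) := by positivity
    linarith
  choose u hu using hseq
  have hkey : ∀ n k : ℕ, c * ‖u n - u k‖ ^ 2 ≤ 1 / ((n:ℝ) + 1) / 2 + 1 / ((k:ℝ) + 1) / 2 := by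
    intro n k
    have h1 := hmid (u n) (u k)
    have h2 := hmle ((2:ℝ)⁻¹ • (u n + u k))
    have h3 := hu n
    have h4 := hu k
    linarith
  have hcauchy : CauchySeq u := by
    rw [Metric.cauchySeq_iff]
    intro ε hε
    obtain ⟨N, hN⟩ := exists_nat_gt (1 / (c * ε ^ 2))
    refine ⟨N, fun n hn k hk => ?_⟩
    have h1 := hkey n k
    have hnN : 1 / ((n:ℝ) + 1) ≤ 1 / ((N:ℝ) + 1) := by
      apply one_div_le_one_div_of_le (by positivity)
      have : (N:ℝ) ≤ n := Nat.cast_le.mpr hn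
      linarith
    have hkN : 1 / ((k:ℝ) + 1) ≤ 1 / ((N:ℝ) + 1) := by
      apply one_div_le_one_div_of_le (by positivity)
      have : (N:ℝ) ≤ k := Nat.cast_le.mpr hk
      linarith
    have hNpos : (0:ℝ) < (N:ℝ) + 1 := by positivity
    have hce : 0 < c * ε ^ 2 := by positivity
    have hlt : 1 / ((N:ℝ) + 1) < c * ε ^ 2 := by
      rw [div_lt_iff₀ hNpos]
      have : 1 / (c * ε ^ 2) < (N:ℝ) := hN
      rw [div_lt_iff₀ hce] at this
      nlinarith
    have h5 : c * ‖u n - u k‖ ^ 2 < c * ε ^ 2 := by linarith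
    have h6 : ‖u n - u k‖ ^ 2 < ε ^ 2 := by
      exact lt_of_mul_lt_mul_left h5 hcpos.le
    rw [dist_eq_norm]
    nlinarith [norm_nonneg (u n - u k)]
  obtain ⟨x, hx⟩ := cauchySeq_tendsto_of_complete hcauchy
  have hf1 : Filter.Tendsto (fun n => f (u n)) Filter.atTop (nhds m) := by
    have hup : Filter.Tendsto (fun n : ℕ => m + 1 / ((n:ℝ) + 1)) Filter.atTop (nhds m) := by
      have := tendsto_one_div_add_atTop_nhds_zero_nat (𝕜 := ℝ)
      simpa using (tendsto_const_nhds (x := m)).add this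
    exact tendsto_of_tendsto_of_tendsto_of_le_of_le tendsto_const_nhds hup
      (fun n => hmle (u n)) (fun n => (hu n).le)
  have hf2 : Filter.Tendsto (fun n => f (u n)) Filter.atTop (nhds (f x)) :=
    ((hc.tendsto x).comp hx)
  have hfx : f x = m := tendsto_nhds_unique hf2 hf1
  refine ⟨x, fun y => hfx ▸ hmle y, fun y hy => ?_⟩
  have h1 := hmid y x
  have h2 := hy ((2:ℝ)⁻¹ • (y + x))
  have h3 := hy x
  have h4 : f x ≤ f y := hfx ▸ hmle y
  have h5 : ‖y - x‖ ^ 2 ≤ 0 := by nlinarith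
  have h6 : ‖y - x‖ = 0 := by nlinarith [norm_nonneg (y - x), sq_nonneg ‖y - x‖]
  rw [← sub_eq_zero]
  exact norm_eq_zero.mp h6

set_option maxHeartbeats 1000000

/-- There exists a unique `u₀* ∈ H` such that `J(u₀*) ≤ J(u₀)` for all `u₀ ∈ H`. -/
theorem exists_unique_minimizer {X : Type*} [MeasurableSpace X] (μ : Measure X)
    [IsFiniteMeasure μ] (L : Lp ℝ 2 μ →L[ℝ] Lp ℝ 2 μ) (uT : Lp ℝ 2 μ)
    (τ β : ℝ) (hτ : 0 < τ) (hβ : 0 < β) :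
    ∃! u₀star : Lp ℝ 2 μ, ∀ u₀ : Lp ℝ 2 μ, J μ L uT τ β u₀star ≤ J μ L uT τ β u₀ := by
  classical
  set I : Lp ℝ 2 μ → ℝ := fun f => ∫ x, |f x| ∂μ with hI
  have hint : ∀ f : Lp ℝ 2 μ, Integrable (fun x => f x) μ := fun f =>
    (Lp.memLp f).integrable (by norm_num)
  have hintabs : ∀ f : Lp ℝ 2 μ, Integrable (fun x => |f x|) μ := fun f => (hint f).abs
  have hInonneg : ∀ f : Lp ℝ 2 μ, 0 ≤ I f := fun f =>
    integral_nonneg fun x => abs_nonneg _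
  -- Lipschitz-type bound for I
  set C : ℝ := (μ Set.univ ^ (1/2 : ℝ)).toReal with hC
  have hClip : ∀ f g : Lp ℝ 2 μ, |I f - I g| ≤ C * ‖f - g‖ := by
    intro f g
    have h1 : I f - I g = ∫ x, (|f x| - |g x|) ∂μ := by
      rw [hI]; rw [integral_sub (hintabs f) (hintabs g)]
    have h2 : |I f - I g| ≤ ∫ x, |f x - g x| ∂μ := by
      rw [h1]
      calc |∫ x, (|f x| - |g x|) ∂μ| ≤ ∫ x, ‖|f x| - |g x|‖ ∂μ := by
            rw [← Real.norm_eq_abs]; exact norm_integral_le_integral_norm _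
        _ ≤ ∫ x, |f x - g x| ∂μ := by
            apply integral_mono ((hintabs f).sub (hintabs g)).norm ((hint f).sub (hint g)).abs
            intro x
            simpa [Real.norm_eq_abs] using abs_abs_sub_abs_le_abs_sub (f x) (g x)
    have h3 : ∫ x, |f x - g x| ∂μ = ∫ x, ‖(f - g : Lp ℝ 2 μ) x‖ ∂μ := by
      apply integral_congr_ae
      filter_upwards [Lp.coeFn_sub f g] with x hx
      rw [Real.norm_eq_abs, hx]
      simp
    have h4 : ∫ x, ‖(f - g : Lp ℝ 2 μ) x‖ ∂μ = (eLpNorm (⇑(f - g : Lp ℝ 2 μ)) 1 μ).toReal := by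
      rw [integral_norm_eq_lintegral_enorm (Lp.aestronglyMeasurable _),
        eLpNorm_one_eq_lintegral_enorm]
    have h5 : eLpNorm (⇑(f - g : Lp ℝ 2 μ)) 1 μ ≤
        eLpNorm (⇑(f - g : Lp ℝ 2 μ)) 2 μ * μ Set.univ ^ (1/2 : ℝ) := by
      have := eLpNorm_le_eLpNorm_mul_rpow_measure_univ (p := 1) (q := 2)
        (by norm_num) (Lp.aestronglyMeasurable (f - g))
      convert this using 2
      norm_num
    have hfin : eLpNorm (⇑(f - g : Lp ℝ 2 μ)) 2 μ * μ Set.univ ^ (1/2 : ℝ) ≠ ⊤ :=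
      ENNReal.mul_ne_top (Lp.eLpNorm_ne_top _)
        (ENNReal.rpow_ne_top_of_nonneg (by norm_num) (measure_ne_top μ _))
    have h6 : (eLpNorm (⇑(f - g : Lp ℝ 2 μ)) 1 μ).toReal ≤ ‖f - g‖ * C := by
      calc (eLpNorm (⇑(f - g : Lp ℝ 2 μ)) 1 μ).toReal
          ≤ (eLpNorm (⇑(f - g : Lp ℝ 2 μ)) 2 μ * μ Set.univ ^ (1/2 : ℝ)).toReal :=
            ENNReal.toReal_mono hfin h5
        _ = ‖f - g‖ * C := by
            rw [ENNReal.toReal_mul, Lp.norm_def]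
    calc |I f - I g| ≤ (eLpNorm (⇑(f - g : Lp ℝ 2 μ)) 1 μ).toReal := by
          rw [← h4, ← h3]; exact h2
      _ ≤ ‖f - g‖ * C := h6
      _ = C * ‖f - g‖ := mul_comm _ _
  have hIcont : Continuous I := by
    have hC0 : 0 ≤ C := ENNReal.toReal_nonneg
    have : LipschitzWith (Real.toNNReal C) I := by
      apply LipschitzWith.of_dist_le_mul
      intro f g
      rw [Real.dist_eq, dist_eq_norm]
      calc |I f - I g| ≤ C * ‖f - g‖ := hClip f g
        _ = (Real.toNNReal C : ℝ) * ‖f - g‖ := by rw [Real.coe_toNNReal C hC0]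
    exact this.continuous
  -- midpoint inequality for I
  have hImid : ∀ u v : Lp ℝ 2 μ,
      I ((2:ℝ)⁻¹ • (u + v)) ≤ I u / 2 + I v / 2 := by
    intro u v
    have hae : (fun x => |((2:ℝ)⁻¹ • (u + v) : Lp ℝ 2 μ) x|) =ᵐ[μ]
        fun x => 2⁻¹ * |u x + v x| := by
      filter_upwards [Lp.coeFn_smul (2:ℝ)⁻¹ (u + v), Lp.coeFn_add u v] with x h1 h2
      rw [h1, Pi.smul_apply, h2, Pi.add_apply, smul_eq_mul, abs_mul]
      norm_num
    have h1 : I ((2:ℝ)⁻¹ • (u + v)) = 2⁻¹ * ∫ x, |u x + v x| ∂μ := by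
      show (∫ x, |((2:ℝ)⁻¹ • (u + v) : Lp ℝ 2 μ) x| ∂μ) = 2⁻¹ * ∫ x, |u x + v x| ∂μ
      rw [integral_congr_ae hae, integral_const_mul]
    have h2 : ∫ x, |u x + v x| ∂μ ≤ ∫ x, (|u x| + |v x|) ∂μ := by
      apply integral_mono ((hint u).add (hint v)).abs ((hintabs u).add (hintabs v))
      intro x
      exact abs_add_le _ _
    rw [h1]
    rw [integral_add (hintabs u) (hintabs v)] at h2
    have := hInonneg u
    have := hInonneg v
    simp only [hI] at *
    linarith
  -- apply abstract lemma
  apply aux_exists_unique_min (J μ L uT τ β)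
  · -- continuity
    unfold J
    apply Continuous.add
    apply Continuous.add
    · exact continuous_const.mul ((L.continuous.sub continuous_const).norm.pow 2)
    · exact continuous_const.mul (continuous_norm.pow 2)
    · exact continuous_const.mul hIcont
  · -- nonnegativity
    intro x
    unfold J
    have := hInonneg x
    have h1 : (0:ℝ) ≤ ‖L x - uT‖ ^ 2 := sq_nonneg _
    have h2 : (0:ℝ) ≤ ‖x‖ ^ 2 := sq_nonneg _
    have h3 : 0 ≤ β * ∫ x_1, |x x_1| ∂μ := mul_nonneg hβ.le this
    nlinarith
  · exact div_pos hτ (by norm_num : (0:ℝ) < 8)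
  · -- midpoint inequality for J
    intro u v
    unfold J
    have hL : L ((2:ℝ)⁻¹ • (u + v)) - uT = (2:ℝ)⁻¹ • ((L u - uT) + (L v - uT)) := by
      rw [L.map_smul, L.map_add]
      rw [smul_add, smul_add, smul_sub, smul_sub]
      module
    have h1 : ‖L ((2:ℝ)⁻¹ • (u + v)) - uT‖ ^ 2 ≤
        ‖L u - uT‖ ^ 2 / 2 + ‖L v - uT‖ ^ 2 / 2 := by
      rw [hL, norm_smul]
      have hn : ‖(L u - uT) + (L v - uT)‖ ≤ ‖L u - uT‖ + ‖L v - uT‖ := norm_add_le _ _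
      have hnn : 0 ≤ ‖(L u - uT) + (L v - uT)‖ := norm_nonneg _
      have : ‖(2:ℝ)⁻¹‖ = 2⁻¹ := by norm_num
      rw [this]
      nlinarith [norm_nonneg (L u - uT), norm_nonneg (L v - uT),
        sq_nonneg (‖L u - uT‖ - ‖L v - uT‖), mul_self_le_mul_self hnn hn]
    have h2 : ‖(2:ℝ)⁻¹ • (u + v)‖ ^ 2 =
        ‖u‖ ^ 2 / 2 + ‖v‖ ^ 2 / 2 - ‖u - v‖ ^ 2 / 4 := by
      have hpar : ‖u + v‖ ^ 2 + ‖u - v‖ ^ 2 = 2 * (‖u‖ * ‖u‖ + ‖v‖ * ‖v‖) := by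
        have := parallelogram_law_with_norm ℝ u v
        nlinarith [this]
      rw [norm_smul]
      have : ‖(2:ℝ)⁻¹‖ = 2⁻¹ := by norm_num
      rw [this]
      nlinarith
    have h3 := hImid u v
    simp only [hI] at h3
    have h3' := mul_le_mul_of_nonneg_left h3 hβ.le
    have h2' : τ / 2 * ‖(2:ℝ)⁻¹ • (u + v)‖ ^ 2
        = τ / 2 * (‖u‖ ^ 2 / 2 + ‖v‖ ^ 2 / 2 - ‖u - v‖ ^ 2 / 4) := by rw [h2]
    linarith
end

section
/- If u₀* ∈ H is the minimizer of J, then there exists λ ∈ H such that ℒ*(ℒu₀* − u_T) + τ u₀* + λ = 0 in H, and for μ-almost every x one has |λ(x)| ≤ β, with λ(x) = β · u₀*(x)/|u₀*(x)| whenever u₀*(x) ≠ 0. -/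
open MeasureTheory

/-!
Write `J = F + G` with `F u = ½‖ℒu − u_T‖² + (τ/2)‖u‖²` smooth and `G u = β∫|u|` convex.
Comparing `J(u₀*)` with `J` along the segment towards any `v` gives the variational inequality
`⟪∇F(u₀*), v − u₀*⟫ + G v − G u₀* ≥ 0`, so `λ = −∇F(u₀*) = −ℒ*(ℒu₀* − u_T) − τu₀*` is a
subgradient of `G` at `u₀*`. Testing with functions that agree with `u₀*` off an arbitrary
measurable set localises this to `λ(x)(t − u₀*(x)) ≤ β(|t| − |u₀*(x)|)` for a.e. `x`, and the
choices `t = 0, 2u₀*(x), u₀*(x) ± 1` pin `λ(x)` down to the subdifferential of `β|·|` at `u₀*(x)`.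
-/

open Set Filter RealInnerProductSpace

theorem abs_le_and_eq_mul_div_abs_of_subgradient {l a β : ℝ} (hβ : 0 ≤ β)
    (hzero : l * (0 - a) ≤ β * (|0| - |a|)) (htwo : l * (2 * a - a) ≤ β * (|2 * a| - |a|))
    (hup : l * (a + 1 - a) ≤ β * (|a + 1| - |a|)) (hdown : l * (a - 1 - a) ≤ β * (|a - 1| - |a|)) :
    |l| ≤ β ∧ (a ≠ 0 → l = β * a / |a|) := by
  refine ⟨abs_le.2 ⟨?_, ?_⟩, fun ha => ?_⟩
  · have : |a - 1| - |a| ≤ 1 := by simpa using abs_sub_abs_le_abs_sub (a - 1) a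
    nlinarith [mul_le_mul_of_nonneg_left this hβ]
  · have : |a + 1| - |a| ≤ 1 := by simpa using abs_sub_abs_le_abs_sub (a + 1) a
    nlinarith [mul_le_mul_of_nonneg_left this hβ]
  · have hla : l * a = β * |a| := by
      rw [abs_zero, abs_mul, abs_two] at *
      linarith
    rw [eq_div_iff (abs_ne_zero.2 ha)]
    rcases ha.lt_or_gt with ha | ha
    · rw [abs_of_neg ha] at hla ⊢; linarith
    · rw [abs_of_pos ha] at hla ⊢; linarith

section FirstOrder

variable {E : Type*} [NormedAddCommGroup E] [InnerProductSpace ℝ E]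

theorem IsMinOn.variational_inequality {f g : E → ℝ} {f' : E →L[ℝ] ℝ} {u : E}
    (hmin : IsMinOn (f + g) univ u) (hf : HasFDerivAt f f' u) (hg : ConvexOn ℝ univ g)
    (v : E) : 0 ≤ f' (v - u) + (g v - g u) := by
  set ψ : ℝ → ℝ := fun s => f (u + s • (v - u)) + (g u + s * (g v - g u))
  have hψ : HasDerivWithinAt ψ (f' (v - u) + (g v - g u)) (Icc 0 1) 0 := by
    have hline : HasDerivAt (fun s : ℝ => u + s • (v - u)) (v - u) 0 := by
      simpa using ((hasDerivAt_id (0 : ℝ)).smul_const (v - u)).const_add u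
    refine (HasDerivAt.add ?_ ?_).hasDerivWithinAt
    · have hf0 : HasFDerivAt f f' (u + (0 : ℝ) • (v - u)) := by simpa using hf
      exact hf0.comp_hasDerivAt 0 hline
    · simpa using ((hasDerivAt_id (0 : ℝ)).mul_const (g v - g u)).const_add (g u)
  have hloc : IsLocalMinOn ψ (Icc 0 1) 0 := by
    refine IsMinOn.localize fun s hs => ?_
    have hconv := hg.2 (mem_univ u) (mem_univ v) (sub_nonneg.2 hs.2) hs.1 (sub_add_cancel 1 s)
    have hseg : (1 - s) • u + s • v = u + s • (v - u) := by
      rw [smul_sub, sub_smul, one_smul]; abel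
    rw [hseg, smul_eq_mul, smul_eq_mul] at hconv
    have hle : f u + g u ≤ f (u + s • (v - u)) + g (u + s • (v - u)) :=
      hmin (mem_univ _)
    show ψ 0 ≤ ψ s
    simp only [ψ, zero_smul, add_zero, zero_mul]
    linarith
  simpa using hloc.hasFDerivWithinAt_nonneg hψ.hasFDerivWithinAt (y := 1)
    (mem_posTangentConeAt_of_segment_subset (by simp [segment_eq_Icc]))

end FirstOrder

section Tikhonov

variable {E F : Type*} [NormedAddCommGroup E] [InnerProductSpace ℝ E] [CompleteSpace E]
  [NormedAddCommGroup F] [InnerProductSpace ℝ F] [CompleteSpace F]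

noncomputable def tikhonov (L : E →L[ℝ] F) (b : F) (τ : ℝ) (u : E) : ℝ :=
  (1 / 2) * ‖L u - b‖ ^ 2 + (τ / 2) * ‖u‖ ^ 2

theorem hasFDerivAt_tikhonov (L : E →L[ℝ] F) (b : F) (τ : ℝ) (u : E) :
    HasFDerivAt (tikhonov L b τ) (innerSL ℝ (L.adjoint (L u - b) + τ • u)) u := by
  have hres : HasFDerivAt (fun u => L u - b) L u := L.hasFDerivAt.sub_const b
  refine ((hres.norm_sq.const_mul (1 / 2)).add
    ((hasFDerivAt_id u).norm_sq.const_mul (τ / 2))).congr_fderiv ?_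
  ext d
  simp [ContinuousLinearMap.adjoint_inner_left]
  ring

end Tikhonov

section Integral

variable {X : Type*} [MeasurableSpace X] {μ : Measure X}

theorem L2.inner_eq_integral_mul (f g : Lp ℝ 2 μ) : ⟪f, g⟫ = ∫ x, f x * g x ∂μ := by
  simp [L2.inner_def, mul_comm]

variable [IsFiniteMeasure μ]

theorem convexOn_integral_abs (p : ENNReal) [Fact (1 ≤ p)] :
    ConvexOn ℝ univ fun u : Lp ℝ p μ => ∫ x, |u x| ∂μ := by
  refine ⟨convex_univ, fun u _ v _ a b ha hb _ => ?_⟩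
  have hu := (Lp.memLp u).integrable Fact.out
  have hv := (Lp.memLp v).integrable Fact.out
  calc ∫ x, |(a • u + b • v) x| ∂μ = ∫ x, |a * u x + b * v x| ∂μ := by
        refine integral_congr_ae ?_
        filter_upwards [Lp.coeFn_add (a • u) (b • v), Lp.coeFn_smul a u, Lp.coeFn_smul b v]
          with x hx hax hbx
        rw [hx, Pi.add_apply, hax, hbx]; rfl
    _ ≤ ∫ x, (a * |u x| + b * |v x|) ∂μ := by
        refine integral_mono_of_nonneg (ae_of_all _ fun x => abs_nonneg _)
          ((hu.abs.const_mul a).add (hv.abs.const_mul b)) (ae_of_all _ fun x => ?_)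
        calc |a * u x + b * v x| ≤ |a * u x| + |b * v x| := abs_add_le _ _
          _ = a * |u x| + b * |v x| := by
            rw [abs_mul, abs_mul, abs_of_nonneg ha, abs_of_nonneg hb]
    _ = a • ∫ x, |u x| ∂μ + b • ∫ x, |v x| ∂μ := by
        rw [integral_add (hu.abs.const_mul a) (hv.abs.const_mul b), integral_const_mul,
          integral_const_mul, smul_eq_mul, smul_eq_mul]

section Subgradient

variable {l u : Lp ℝ 2 μ} {β : ℝ}

theorem integral_mul_sub_le_of_inner_sub_le
    (h : ∀ v : Lp ℝ 2 μ, ⟪l, v - u⟫ ≤ β * ∫ x, |v x| ∂μ - β * ∫ x, |u x| ∂μ)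
    {g : X → ℝ} (hg : MemLp g 2 μ) :
    ∫ x, l x * (g x - u x) ∂μ ≤ ∫ x, β * (|g x| - |u x|) ∂μ := by
  have hgu := (hg.integrable one_le_two).abs
  have huu := ((Lp.memLp u).integrable one_le_two).abs
  calc ∫ x, l x * (g x - u x) ∂μ = ⟪l, hg.toLp g - u⟫ := by
        rw [L2.inner_eq_integral_mul]
        refine integral_congr_ae ?_
        filter_upwards [Lp.coeFn_sub (hg.toLp g) u, hg.coeFn_toLp] with x hx_sub hx_g
        rw [hx_sub, Pi.sub_apply, hx_g]
    _ ≤ β * ∫ x, |hg.toLp g x| ∂μ - β * ∫ x, |u x| ∂μ := h _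
    _ = ∫ x, β * (|g x| - |u x|) ∂μ := by
        rw [integral_congr_ae (hg.coeFn_toLp.mono fun x hx => by rw [hx]),
          integral_const_mul, integral_sub hgu huu, mul_sub]

theorem ae_mul_sub_le_of_inner_sub_le
    (h : ∀ v : Lp ℝ 2 μ, ⟪l, v - u⟫ ≤ β * ∫ x, |v x| ∂μ - β * ∫ x, |u x| ∂μ)
    {v : X → ℝ} (hv : MemLp v 2 μ) :
    ∀ᵐ x ∂μ, l x * (v x - u x) ≤ β * (|v x| - |u x|) := by
  classical
  have hint : ∀ g : X → ℝ, MemLp g 2 μ → Integrable (fun x => l x * (g x - u x)) μ ∧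
      Integrable (fun x => β * (|g x| - |u x|)) μ := fun g hg =>
    ⟨(Lp.memLp l).integrable_mul (hg.sub (Lp.memLp u)),
      ((hg.integrable one_le_two).abs.sub ((Lp.memLp u).integrable one_le_two).abs).const_mul β⟩
  suffices 0 ≤ᵐ[μ] fun x => β * (|v x| - |u x|) - l x * (v x - u x) from
    this.mono fun x hx => sub_nonneg.1 hx
  refine ae_nonneg_of_forall_setIntegral_nonneg ((hint v hv).2.sub (hint v hv).1) fun s hs _ => ?_
  have hg : MemLp (s.piecewise v u) 2 μ :=
    (hv.restrict s).piecewise hs ((Lp.memLp u).restrict sᶜ)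
  calc (0 : ℝ) ≤ ∫ x, β * (|s.piecewise v u x| - |u x|) ∂μ
        - ∫ x, l x * (s.piecewise v u x - u x) ∂μ :=
        sub_nonneg.2 (integral_mul_sub_le_of_inner_sub_le h hg)
    _ = ∫ x in s, β * (|v x| - |u x|) - l x * (v x - u x) ∂μ := by
        rw [← integral_sub (hint _ hg).2 (hint _ hg).1, ← integral_indicator hs]
        congr 1 with x
        by_cases hx : x ∈ s <;> simp [hx]

end Subgradient

end Integral

theorem first_order_optimality_general {X : Type*} [MeasurableSpace X] (μ : Measure X)
    [IsFiniteMeasure μ] (L : Lp ℝ 2 μ →L[ℝ] Lp ℝ 2 μ) (uT : Lp ℝ 2 μ)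
    (τ β : ℝ) (hβ : 0 < β) (u₀star : Lp ℝ 2 μ)
    (hmin : ∀ u₀ : Lp ℝ 2 μ, J μ L uT τ β u₀star ≤ J μ L uT τ β u₀) :
    ∃ lam : Lp ℝ 2 μ,
      L.adjoint (L u₀star - uT) + τ • u₀star + lam = 0 ∧
      ∀ᵐ x ∂μ, |lam x| ≤ β ∧ (u₀star x ≠ 0 → lam x = β * u₀star x / |u₀star x|) := by
  set w := L.adjoint (L u₀star - uT) + τ • u₀star
  refine ⟨-w, add_neg_cancel w, ?_⟩
  have hsub (v : Lp ℝ 2 μ) :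
      ⟪-w, v - u₀star⟫ ≤ β * ∫ x, |v x| ∂μ - β * ∫ x, |u₀star x| ∂μ := by
    have := IsMinOn.variational_inequality (f := tikhonov L uT τ)
      (g := fun u : Lp ℝ 2 μ => β * ∫ x, |u x| ∂μ) (fun u _ => hmin u)
      (hasFDerivAt_tikhonov L uT τ u₀star) ((convexOn_integral_abs 2).smul hβ.le) v
    rw [innerSL_apply_apply] at this
    rw [inner_neg_left]
    linarith
  have hu := Lp.memLp u₀star
  filter_upwards [ae_mul_sub_le_of_inner_sub_le hsub (memLp_const (0 : ℝ)),
    ae_mul_sub_le_of_inner_sub_le hsub (hu.const_mul 2),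
    ae_mul_sub_le_of_inner_sub_le hsub (hu.add (memLp_const 1)),
    ae_mul_sub_le_of_inner_sub_le hsub (hu.sub (memLp_const 1))] with x hzero htwo hup hdown
  exact abs_le_and_eq_mul_div_abs_of_subgradient hβ.le hzero htwo hup hdown

/-- First-order optimality condition: if `u₀*` minimizes `J`, there is `λ ∈ H` with
`ℒ*(ℒu₀* − u_T) + τ u₀* + λ = 0`, `|λ(x)| ≤ β` a.e., and `λ(x) = β u₀*(x)/|u₀*(x)|`
wherever `u₀*(x) ≠ 0`. -/
theorem first_order_optimality {X : Type*} [MeasurableSpace X] (μ : Measure X)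
    [IsFiniteMeasure μ] (L : Lp ℝ 2 μ →L[ℝ] Lp ℝ 2 μ) (uT : Lp ℝ 2 μ)
    (τ β : ℝ) (hτ : 0 < τ) (hβ : 0 < β) (u₀star : Lp ℝ 2 μ)
    (hmin : ∀ u₀ : Lp ℝ 2 μ, J μ L uT τ β u₀star ≤ J μ L uT τ β u₀) :
    ∃ lam : Lp ℝ 2 μ,
      L.adjoint (L u₀star - uT) + τ • u₀star + lam = 0 ∧
      ∀ᵐ x ∂μ, |lam x| ≤ β ∧ (u₀star x ≠ 0 → lam x = β * u₀star x / |u₀star x|) :=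
  first_order_optimality_general μ L uT τ β hβ u₀star hmin
end

section
/- If u₀* ∈ H is the minimizer of J and ψ = ℒ*(ℒu₀* − u_T), then u₀* vanishes μ-almost everywhere on the set {x ∈ X : |ψ(x)| ≤ β}; that is, for μ-a.e. x, |ψ(x)| ≤ β implies u₀*(x) = 0. -/
/-! Put `S = {|ψ| ≤ β}`, `w = 1_S u₀*` and compare `J` at `u₀*` and at `u₀* − t w`, `0 < t ≤ 1`.
Shrinking `u₀*` towards zero on `S` makes the `L¹` term exactly linear in `t`, so
`J (u₀* − t w) = J u₀* − t D + t² C` with `D = ⟪ψ + τ u₀*, w⟫ + β ∫ |w|`, and minimality forces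
`D ≤ 0`. Since `⟪u₀*, w⟫ = ‖w‖²` and `ψ w + β |w| ≥ 0` pointwise (as `|ψ| ≤ β` wherever `w ≠ 0`),
this leaves `τ ‖w‖² ≤ 0`, i.e. `w = 0`. -/

open MeasureTheory

open Filter Topology
open scoped RealInnerProductSpace

theorem nonpos_of_forall_mul_le_sq_mul {D C : ℝ}
    (h : ∀ t : ℝ, 0 < t → t ≤ 1 → t * D ≤ t ^ 2 * C) : D ≤ 0 := by
  have hlim : Tendsto (fun t : ℝ => t * C) (𝓝[>] 0) (𝓝 0) := by
    simpa using (tendsto_id.mul_const C).mono_left (nhdsWithin_le_nhds (a := (0 : ℝ)))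
  refine ge_of_tendsto hlim ?_
  filter_upwards [Ioo_mem_nhdsGT one_pos] with t ⟨ht0, ht1⟩
  have hle := h t ht0 ht1.le
  rw [sq, mul_assoc] at hle
  exact le_of_mul_le_mul_left hle ht0

theorem norm_sub_smul_sq_real {F : Type*} [NormedAddCommGroup F] [InnerProductSpace ℝ F]
    (a b : F) (t : ℝ) :
    ‖a - t • b‖ ^ 2 = ‖a‖ ^ 2 - 2 * t * ⟪a, b⟫ + t ^ 2 * ‖b‖ ^ 2 := by
  rw [norm_sub_sq_real, real_inner_smul_right, norm_smul, mul_pow, Real.norm_eq_abs, sq_abs]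
  ring

section Hilbert

variable {E F : Type*} [NormedAddCommGroup E] [InnerProductSpace ℝ E] [CompleteSpace E]
  [NormedAddCommGroup F] [InnerProductSpace ℝ F] [CompleteSpace F]

theorem tikhonov_sub_smul (L : E →L[ℝ] F) (y : F) (τ t : ℝ) (u w : E) :
    1 / 2 * ‖L (u - t • w) - y‖ ^ 2 + τ / 2 * ‖u - t • w‖ ^ 2
      = 1 / 2 * ‖L u - y‖ ^ 2 + τ / 2 * ‖u‖ ^ 2 - t * ⟪L.adjoint (L u - y) + τ • u, w⟫
        + t ^ 2 * (1 / 2 * ‖L w‖ ^ 2 + τ / 2 * ‖w‖ ^ 2) := by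
  have hL : L (u - t • w) - y = (L u - y) - t • L w := by
    rw [map_sub, map_smul]; abel
  rw [hL, norm_sub_smul_sq_real, norm_sub_smul_sq_real, inner_add_left,
    ContinuousLinearMap.adjoint_inner_left, real_inner_smul_left]
  ring

end Hilbert

theorem abs_sub_mul_indicator_self {X : Type*} {s : Set X} (f : X → ℝ) (x : X) {t : ℝ}
    (ht : t ≤ 1) :
    |f x - t * s.indicator f x| = |f x| - t * |s.indicator f x| := by
  by_cases hxs : x ∈ s
  · rw [Set.indicator_of_mem hxs, ← one_sub_mul, abs_mul, abs_of_nonneg (by linarith)]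
    ring
  · simp [hxs]

section Indicator

variable {X E : Type*} [MeasurableSpace X] {μ : Measure X} {p : ENNReal} {s : Set X}
  [NormedAddCommGroup E]

noncomputable def indicatorLp (hs : MeasurableSet s) (f : Lp E p μ) : Lp E p μ :=
  ((Lp.memLp f).indicator hs).toLp (s.indicator f)

theorem coeFn_indicatorLp (hs : MeasurableSet s) (f : Lp E p μ) :
    indicatorLp hs f =ᵐ[μ] s.indicator f :=
  MemLp.coeFn_toLp _

theorem ae_eq_zero_on_of_indicatorLp_eq_zero {hs : MeasurableSet s} {f : Lp E p μ}
    (hf : indicatorLp hs f = 0) : ∀ᵐ x ∂μ, x ∈ s → f x = 0 := by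
  filter_upwards [coeFn_indicatorLp hs f, Lp.coeFn_zero E p μ] with x hx h0 hxs
  rw [← Set.indicator_of_mem hxs f, ← hx, hf, h0, Pi.zero_apply]

theorem real_inner_indicatorLp_self [InnerProductSpace ℝ E] (hs : MeasurableSet s)
    (f : Lp E 2 μ) : ⟪f, indicatorLp hs f⟫ = ‖indicatorLp hs f‖ ^ 2 := by
  rw [← real_inner_self_eq_norm_sq, L2.inner_def, L2.inner_def]
  refine integral_congr_ae ?_
  filter_upwards [coeFn_indicatorLp hs f] with x hx
  rw [hx]
  by_cases hxs : x ∈ s <;> simp [hxs]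

end Indicator

section RealL2

variable {X : Type*} [MeasurableSpace X] {μ : Measure X} [IsFiniteMeasure μ]

theorem integral_abs_sub_smul_indicatorLp {p : ENNReal} [Fact (1 ≤ p)] {s : Set X}
    (hs : MeasurableSet s) (f : Lp ℝ p μ) {t : ℝ} (ht : t ≤ 1) :
    ∫ x, |(f - t • indicatorLp hs f) x| ∂μ
      = ∫ x, |f x| ∂μ - t * ∫ x, |indicatorLp hs f x| ∂μ := by
  have hf : Integrable f μ := (Lp.memLp f).integrable Fact.out
  have hw : Integrable (indicatorLp hs f) μ := (Lp.memLp _).integrable Fact.out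
  rw [← integral_const_mul, ← integral_sub hf.abs (hw.abs.const_mul t)]
  refine integral_congr_ae ?_
  filter_upwards [Lp.coeFn_sub f (t • indicatorLp hs f), Lp.coeFn_smul t (indicatorLp hs f),
    coeFn_indicatorLp hs f] with x hsub hsmul hw
  rw [hsub, Pi.sub_apply, hsmul, Pi.smul_apply, smul_eq_mul, hw]
  exact abs_sub_mul_indicator_self f x ht

theorem inner_add_mul_integral_abs_nonneg {ψ g : Lp ℝ 2 μ} {β : ℝ}
    (h : ∀ᵐ x ∂μ, g x ≠ 0 → |ψ x| ≤ β) : 0 ≤ ⟪ψ, g⟫ + β * ∫ x, |g x| ∂μ := by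
  have hg : Integrable g μ := (Lp.memLp g).integrable one_le_two
  rw [L2.inner_def, ← integral_const_mul, ← integral_add (L2.integrable_inner ψ g)
    (hg.abs.const_mul β)]
  refine integral_nonneg_of_ae ?_
  filter_upwards [h] with x hx
  by_cases hgx : g x = 0
  · simp [hgx]
  · have hlow : -(|ψ x| * |g x|) ≤ ψ x * g x := abs_mul (ψ x) (g x) ▸ neg_abs_le _
    have hbound := mul_le_mul_of_nonneg_right (hx hgx) (abs_nonneg (g x))
    simp only [Pi.zero_apply, RCLike.inner_apply, conj_trivial]
    linarith

end RealL2

section CostFunctional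

variable {X : Type*} [MeasurableSpace X] {μ : Measure X} [IsFiniteMeasure μ]
  (L : Lp ℝ 2 μ →L[ℝ] Lp ℝ 2 μ) (uT : Lp ℝ 2 μ) (τ β : ℝ)

theorem J_sub_smul_indicatorLp {s : Set X} (hs : MeasurableSet s) (u : Lp ℝ 2 μ) {t : ℝ}
    (ht : t ≤ 1) :
    J μ L uT τ β (u - t • indicatorLp hs u) = J μ L uT τ β u
      - t * (⟪L.adjoint (L u - uT) + τ • u, indicatorLp hs u⟫
          + β * ∫ x, |indicatorLp hs u x| ∂μ)
      + t ^ 2 * (1 / 2 * ‖L (indicatorLp hs u)‖ ^ 2 + τ / 2 * ‖indicatorLp hs u‖ ^ 2) := by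
  unfold J
  rw [tikhonov_sub_smul, integral_abs_sub_smul_indicatorLp hs u ht]
  ring

theorem inner_add_mul_integral_abs_indicatorLp_nonpos_of_isMin {s : Set X}
    (hs : MeasurableSet s) {u : Lp ℝ 2 μ} (hmin : ∀ v, J μ L uT τ β u ≤ J μ L uT τ β v) :
    ⟪L.adjoint (L u - uT) + τ • u, indicatorLp hs u⟫ + β * ∫ x, |indicatorLp hs u x| ∂μ
      ≤ 0 := by
  refine nonpos_of_forall_mul_le_sq_mul
    (C := 1 / 2 * ‖L (indicatorLp hs u)‖ ^ 2 + τ / 2 * ‖indicatorLp hs u‖ ^ 2)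
    fun t _ ht => ?_
  have hle := hmin (u - t • indicatorLp hs u)
  rw [J_sub_smul_indicatorLp L uT τ β hs u ht] at hle
  linarith

end CostFunctional

theorem minimizer_vanishes_where_adjoint_small_general {X : Type*} [MeasurableSpace X] (μ : Measure X)
    [IsFiniteMeasure μ] (L : Lp ℝ 2 μ →L[ℝ] Lp ℝ 2 μ) (uT : Lp ℝ 2 μ)
    (τ β : ℝ) (hτ : 0 < τ) (u₀star : Lp ℝ 2 μ)
    (hmin : ∀ u₀ : Lp ℝ 2 μ, J μ L uT τ β u₀star ≤ J μ L uT τ β u₀)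
    (ψ : Lp ℝ 2 μ) (hψ : ψ = L.adjoint (L u₀star - uT)) :
    ∀ᵐ x ∂μ, |ψ x| ≤ β → u₀star x = 0 := by
  have hS : MeasurableSet {x | |ψ x| ≤ β} :=
    measurableSet_le (Lp.stronglyMeasurable ψ).measurable.abs measurable_const
  have hfirst := inner_add_mul_integral_abs_indicatorLp_nonpos_of_isMin L uT τ β hS hmin
  rw [← hψ, inner_add_left, real_inner_smul_left, real_inner_indicatorLp_self] at hfirst
  set w := indicatorLp hS u₀star
  have hsmall : 0 ≤ ⟪ψ, w⟫ + β * ∫ x, |w x| ∂μ := by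
    refine inner_add_mul_integral_abs_nonneg ?_
    filter_upwards [coeFn_indicatorLp hS u₀star] with x hx hwx
    rw [hx] at hwx
    exact Set.mem_of_indicator_ne_zero (s := {x | |ψ x| ≤ β}) hwx
  have hw : ‖w‖ ^ 2 ≤ 0 := nonpos_of_mul_nonpos_right (by linarith) hτ
  exact ae_eq_zero_on_of_indicatorLp_eq_zero (norm_eq_zero.mp ((sq_nonpos_iff _).mp hw))

/-- Structural property: with `ψ = ℒ*(ℒu₀* − u_T)`, for a.e. `x`,
`|ψ(x)| ≤ β` implies `u₀*(x) = 0`. -/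
theorem minimizer_vanishes_where_adjoint_small {X : Type*} [MeasurableSpace X] (μ : Measure X)
    [IsFiniteMeasure μ] (L : Lp ℝ 2 μ →L[ℝ] Lp ℝ 2 μ) (uT : Lp ℝ 2 μ)
    (τ β : ℝ) (hτ : 0 < τ) (hβ : 0 < β) (u₀star : Lp ℝ 2 μ)
    (hmin : ∀ u₀ : Lp ℝ 2 μ, J μ L uT τ β u₀star ≤ J μ L uT τ β u₀)
    (ψ : Lp ℝ 2 μ) (hψ : ψ = L.adjoint (L u₀star - uT)) :
    ∀ᵐ x ∂μ, |ψ x| ≤ β → u₀star x = 0 :=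
  minimizer_vanishes_where_adjoint_small_general μ L uT τ β hτ u₀star hmin ψ hψ
end

section
/- Suppose ℒ*u_T is essentially bounded and set β₀ = ‖ℒ*u_T‖_{L^∞(μ)}. If β ≥ β₀, then J(0) ≤ J(u₀) for every u₀ ∈ H, and 0 is the unique minimizer of J over H. -/
open MeasureTheory

/-- If `ℒ*u_T` is essentially bounded and `β ≥ β₀ := ‖ℒ*u_T‖_{L^∞(μ)}`, then `J(0) ≤ J(u₀)`
for every `u₀ ∈ H`, and `0` is the unique minimizer of `J`. -/
theorem zero_is_unique_minimizer_of_beta_large {X : Type*} [MeasurableSpace X] (μ : Measure X)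
    [IsFiniteMeasure μ] (L : Lp ℝ 2 μ →L[ℝ] Lp ℝ 2 μ) (uT : Lp ℝ 2 μ)
    (τ β : ℝ) (hτ : 0 < τ) (hβ : 0 < β)
    (hbdd : MemLp (⇑(L.adjoint uT)) ⊤ μ)
    (β₀ : ℝ) (hβ₀ : β₀ = (eLpNorm (⇑(L.adjoint uT)) ⊤ μ).toReal)
    (h : β₀ ≤ β) :
    (∀ u₀ : Lp ℝ 2 μ, J μ L uT τ β 0 ≤ J μ L uT τ β u₀) ∧
    (∀ u₀ : Lp ℝ 2 μ, (∀ v : Lp ℝ 2 μ, J μ L uT τ β u₀ ≤ J μ L uT τ β v) → u₀ = 0) := by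
  set w := L.adjoint uT with hw
  have hJ0 : J μ L uT τ β 0 = (1 / 2) * ‖uT‖ ^ 2 := by
    have h0 : (∫ x, |(0 : Lp ℝ 2 μ) x| ∂μ) = 0 := by
      have he : (fun x => |(0 : Lp ℝ 2 μ) x|) =ᵐ[μ] fun _ => (0:ℝ) := by
        filter_upwards [Lp.coeFn_zero ℝ 2 μ] with x hx
        rw [hx]; simp
      rw [integral_congr_ae he, integral_zero]
    simp only [J, map_zero, zero_sub, norm_neg, norm_zero, h0]
    ring
  have key : ∀ u₀ : Lp ℝ 2 μ, J μ L uT τ β 0 + (τ / 2) * ‖u₀‖ ^ 2 ≤ J μ L uT τ β u₀ := by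
    intro u₀
    -- a.e. bound on w
    have hfin : eLpNormEssSup (⇑w) μ ≠ ⊤ := by
      have := hbdd.2
      rw [eLpNorm_exponent_top] at this
      exact this.ne
    have hC : ∀ᵐ x ∂μ, |w x| ≤ β₀ := by
      filter_upwards [ae_le_eLpNormEssSup (f := ⇑w) (μ := μ)] with x hx
      have := ENNReal.toReal_mono hfin hx
      simpa [hβ₀, eLpNorm_exponent_top, Real.norm_eq_abs] using this
    have habs_int : Integrable (fun x => |u₀ x|) μ :=
      ((Lp.memLp u₀).integrable (by norm_num)).abs
    have hinner_int : Integrable (fun x => u₀ x * w x) μ := by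
      have := MeasureTheory.L2.integrable_inner (𝕜 := ℝ) u₀ w
      simpa [RCLike.inner_apply, conj_trivial, mul_comm] using this
    have hinner : (inner ℝ u₀ w : ℝ) = ∫ x, u₀ x * w x ∂μ := by
      rw [MeasureTheory.L2.inner_def]
      simp [RCLike.inner_apply, conj_trivial, mul_comm]
    have hbound : (inner ℝ (L u₀) uT : ℝ) ≤ β * ∫ x, |u₀ x| ∂μ := by
      have h1 : (inner ℝ (L u₀) uT : ℝ) = (inner ℝ u₀ w : ℝ) := by
        rw [hw, ContinuousLinearMap.adjoint_inner_right]
      have h2 : (∫ x, u₀ x * w x ∂μ) ≤ ∫ x, β₀ * |u₀ x| ∂μ := by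
        refine integral_mono_ae hinner_int (habs_int.const_mul _) ?_
        filter_upwards [hC] with x hx
        calc u₀ x * w x ≤ |u₀ x * w x| := le_abs_self _
          _ = |u₀ x| * |w x| := abs_mul _ _
          _ ≤ |u₀ x| * β₀ := by
              exact mul_le_mul_of_nonneg_left hx (abs_nonneg _)
          _ = β₀ * |u₀ x| := mul_comm _ _
      have hI : 0 ≤ ∫ x, |u₀ x| ∂μ := integral_nonneg fun x => abs_nonneg _
      rw [h1, hinner]
      calc (∫ x, u₀ x * w x ∂μ) ≤ ∫ x, β₀ * |u₀ x| ∂μ := h2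
        _ = β₀ * ∫ x, |u₀ x| ∂μ := integral_const_mul _ _
        _ ≤ β * ∫ x, |u₀ x| ∂μ := mul_le_mul_of_nonneg_right h hI
    have hexp : ‖L u₀ - uT‖ ^ 2 = ‖L u₀‖ ^ 2 - 2 * (inner ℝ (L u₀) uT : ℝ) + ‖uT‖ ^ 2 :=
      norm_sub_sq_real _ _
    have hLnn : (0:ℝ) ≤ ‖L u₀‖ ^ 2 := sq_nonneg _
    rw [hJ0]
    simp only [J]
    nlinarith [hbound, hLnn, hexp]
  refine ⟨fun u₀ => le_trans (by nlinarith [sq_nonneg ‖u₀‖]) (key u₀), fun u₀ hmin => ?_⟩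
  have h1 := key u₀
  have h2 := hmin 0
  have : ‖u₀‖ ^ 2 = 0 := by nlinarith [sq_nonneg ‖u₀‖]
  have : ‖u₀‖ = 0 := by
    have := sq_eq_zero_iff.mp this
    exact this
  exact norm_eq_zero.mp this
end

section
/- Suppose ℒ*u_T is essentially bounded. Then for every u₀ ∈ H, J(u₀) − J(0) ≥ ½‖ℒu₀‖² + (β − ‖ℒ*u_T‖_{L^∞(μ)}) ∫_X |u₀| dμ + (τ/2)‖u₀‖². -/
open MeasureTheory

/-- If `ℒ*u_T` is essentially bounded, then for every `u₀ ∈ H`,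
`J(u₀) − J(0) ≥ ½‖ℒu₀‖² + (β − ‖ℒ*u_T‖_{L^∞(μ)}) ∫|u₀| dμ + (τ/2)‖u₀‖²`. -/
theorem J_sub_J_zero_lower_bound {X : Type*} [MeasurableSpace X] (μ : Measure X)
    [IsFiniteMeasure μ] (L : Lp ℝ 2 μ →L[ℝ] Lp ℝ 2 μ) (uT : Lp ℝ 2 μ)
    (τ β : ℝ) (hτ : 0 < τ) (hβ : 0 < β)
    (hbdd : MemLp (⇑(L.adjoint uT)) ⊤ μ) :
    ∀ u₀ : Lp ℝ 2 μ,
      J μ L uT τ β u₀ - J μ L uT τ β 0 ≥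
        (1 / 2) * ‖L u₀‖ ^ 2
          + (β - (eLpNorm (⇑(L.adjoint uT)) ⊤ μ).toReal) * ∫ x, |u₀ x| ∂μ
          + (τ / 2) * ‖u₀‖ ^ 2 := by
  intro u₀
  set g := L.adjoint uT with hg
  set C := (eLpNorm (⇑g) ⊤ μ).toReal with hC
  -- J at 0
  have hJ0 : J μ L uT τ β 0 = (1 / 2) * ‖uT‖ ^ 2 := by
    have h0 : (∫ x, |(0 : Lp ℝ 2 μ) x| ∂μ) = 0 := by
      have he : (fun x => |(0 : Lp ℝ 2 μ) x|) =ᵐ[μ] fun _ => (0 : ℝ) :=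
        (Lp.coeFn_zero ℝ 2 μ).mono fun x hx => by simp only [hx, Pi.zero_apply, abs_zero]
      rw [integral_congr_ae he, integral_zero]
    simp only [J, h0, mul_zero, map_zero, zero_sub, norm_neg, norm_zero]
    ring
  -- expand the square
  have hsq : ‖L u₀ - uT‖ ^ 2 = ‖L u₀‖ ^ 2 - 2 * inner ℝ (L u₀) uT + ‖uT‖ ^ 2 := by
    rw [@norm_sub_sq_real]
  have hadj : (inner ℝ (L u₀) uT : ℝ) = inner ℝ u₀ g := by
    rw [hg, ContinuousLinearMap.adjoint_inner_right]
  have hinner : (inner ℝ u₀ g : ℝ) = ∫ x, u₀ x * g x ∂μ := by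
    rw [L2.inner_def]
    congr 1; funext x; simp [mul_comm]
  -- integrability facts
  have hu₀i : Integrable (fun x => u₀ x) μ := by
    exact (Lp.memLp u₀).integrable (by norm_num)
  have habs : Integrable (fun x => |u₀ x|) μ := hu₀i.abs
  have hgbd : ∀ᵐ x ∂μ, ‖g x‖₊ ≤ eLpNormEssSup (⇑g) μ := ae_le_eLpNormEssSup
  have hCfin : eLpNorm (⇑g) ⊤ μ < ⊤ := hbdd.2
  have hgC : ∀ᵐ x ∂μ, |g x| ≤ C := by
    filter_upwards [hgbd] with x hx
    rw [hC, eLpNorm_exponent_top]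
    have := ENNReal.toReal_mono hCfin.ne (by exact_mod_cast hx : (‖g x‖₊ : ENNReal) ≤ eLpNorm (⇑g) ⊤ μ)
    simpa [Real.norm_eq_abs] using this
  have hprod : Integrable (fun x => u₀ x * g x) μ := by
    refine Integrable.mono' (habs.mul_const C) ?_ ?_
    · exact (Lp.aestronglyMeasurable u₀).mul hbdd.1
    · filter_upwards [hgC] with x hx
      rw [norm_mul]
      exact mul_le_mul_of_nonneg_left (le_trans (le_abs_self _) (by simpa [Real.norm_eq_abs] using hx)) (norm_nonneg _)
  -- key inequality
  have hkey : (∫ x, u₀ x * g x ∂μ) ≤ C * ∫ x, |u₀ x| ∂μ := by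
    have h1 : (∫ x, u₀ x * g x ∂μ) ≤ ∫ x, |u₀ x| * C ∂μ := by
      refine integral_mono_ae hprod (habs.mul_const C) ?_
      filter_upwards [hgC] with x hx
      calc u₀ x * g x ≤ |u₀ x * g x| := le_abs_self _
        _ = |u₀ x| * |g x| := abs_mul _ _
        _ ≤ |u₀ x| * C := mul_le_mul_of_nonneg_left hx (abs_nonneg _)
    rw [integral_mul_const] at h1
    linarith [h1]
  have hJ : J μ L uT τ β u₀ - J μ L uT τ β 0 =
      (1 / 2) * ‖L u₀‖ ^ 2 - (∫ x, u₀ x * g x ∂μ) + (τ / 2) * ‖u₀‖ ^ 2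
        + β * ∫ x, |u₀ x| ∂μ := by
    rw [hJ0, J, hsq, hadj, hinner]; ring
  rw [hJ]
  nlinarith [hkey]
end

section
/- Let τ > 0, β > 0, r > 0 and a ∈ ℝ. The function t ↦ (τ/2)t² + β|t| + (1/(2r))(t − a)² has a unique minimizer over ℝ, given by S_γ(a/(τr + 1)) with γ = βr/(τr + 1), where the shrinkage operator is S_γ(b) = b − γ if b > γ, S_γ(b) = 0 if |b| ≤ γ, and S_γ(b) = b + γ if b < −γ. -/
set_option maxHeartbeats 1000000


/-- The shrinkage (soft-thresholding) operator `S_γ`. -/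
noncomputable def shrink (γ b : ℝ) : ℝ :=
  if b > γ then b - γ else if b < -γ then b + γ else 0

/-- For `τ, β, r > 0` and `a ∈ ℝ`, the function
`t ↦ (τ/2)t² + β|t| + (1/(2r))(t − a)²` has a unique minimizer over `ℝ`, given by
`S_γ(a/(τr + 1))` with `γ = βr/(τr + 1)`. -/
theorem shrink_is_unique_minimizer (τ β r a : ℝ) (hτ : 0 < τ) (hβ : 0 < β) (hr : 0 < r) :
    (∀ t : ℝ,
        (τ / 2) * (shrink (β * r / (τ * r + 1)) (a / (τ * r + 1))) ^ 2
          + β * |shrink (β * r / (τ * r + 1)) (a / (τ * r + 1))|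
          + (1 / (2 * r)) * (shrink (β * r / (τ * r + 1)) (a / (τ * r + 1)) - a) ^ 2
        ≤ (τ / 2) * t ^ 2 + β * |t| + (1 / (2 * r)) * (t - a) ^ 2) ∧
    (∀ t : ℝ,
        (∀ t' : ℝ, (τ / 2) * t ^ 2 + β * |t| + (1 / (2 * r)) * (t - a) ^ 2
            ≤ (τ / 2) * t' ^ 2 + β * |t'| + (1 / (2 * r)) * (t' - a) ^ 2) →
        t = shrink (β * r / (τ * r + 1)) (a / (τ * r + 1))) := by
  have hD : (0:ℝ) < τ * r + 1 := by positivity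
  have hD' : (τ * r + 1) ≠ 0 := ne_of_gt hD
  have hr' : r ≠ 0 := ne_of_gt hr
  set γ := β * r / (τ * r + 1) with hγdef
  set b := a / (τ * r + 1) with hbdef
  have hγ : 0 < γ := by positivity
  have hbD : b * (τ * r + 1) = a := by rw [hbdef]; field_simp
  have hgD : γ * (τ * r + 1) = β * r := by rw [hγdef]; field_simp
  set s := shrink γ b with hs
  have key : ∀ t : ℝ,
      (τ / 2) * s ^ 2 + β * |s| + (1 / (2 * r)) * (s - a) ^ 2
        + (τ / 2 + 1 / (2 * r)) * (t - s) ^ 2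
      ≤ (τ / 2) * t ^ 2 + β * |t| + (1 / (2 * r)) * (t - a) ^ 2 := by
    intro t
    rw [hs]
    unfold shrink
    split_ifs with h1 h2
    · -- b > γ, s = b - γ > 0
      have hsp : 0 < b - γ := by linarith
      rw [abs_of_pos hsp]
      rcases abs_cases t with ⟨ht, ht0⟩ | ⟨ht, ht0⟩ <;> rw [ht]
      · apply le_of_eq
        rw [hbdef, hγdef]
        field_simp
        ring
      · have hid : (τ / 2) * t ^ 2 + β * (-t) + (1 / (2 * r)) * (t - a) ^ 2
            - ((τ / 2) * (b - γ) ^ 2 + β * (b - γ) + (1 / (2 * r)) * ((b - γ) - a) ^ 2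
              + (τ / 2 + 1 / (2 * r)) * (t - (b - γ)) ^ 2) = -2 * β * t := by
          rw [hbdef, hγdef]
          field_simp
          ring
        nlinarith [mul_nonneg hβ.le (neg_nonneg.mpr ht0.le)]
    · -- b < -γ, s = b + γ < 0
      have hsn : b + γ < 0 := by linarith
      rw [abs_of_neg hsn]
      rcases abs_cases t with ⟨ht, ht0⟩ | ⟨ht, ht0⟩ <;> rw [ht]
      · have hid : (τ / 2) * t ^ 2 + β * t + (1 / (2 * r)) * (t - a) ^ 2
            - ((τ / 2) * (b + γ) ^ 2 + β * (-(b + γ)) + (1 / (2 * r)) * ((b + γ) - a) ^ 2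
              + (τ / 2 + 1 / (2 * r)) * (t - (b + γ)) ^ 2) = 2 * β * t := by
          rw [hbdef, hγdef]
          field_simp
          ring
        nlinarith [mul_nonneg hβ.le ht0]
      · apply le_of_eq
        rw [hbdef, hγdef]
        field_simp
        ring
    · -- |b| ≤ γ, s = 0
      have hble : -γ ≤ b := not_lt.mp h2
      have hbge : b ≤ γ := not_lt.mp h1
      have hab : |a| ≤ β * r := by
        rw [abs_le]
        constructor <;> nlinarith
      have hid : (τ / 2) * t ^ 2 + β * |t| + (1 / (2 * r)) * (t - a) ^ 2
          - ((τ / 2) * (0:ℝ) ^ 2 + β * |(0:ℝ)| + (1 / (2 * r)) * ((0:ℝ) - a) ^ 2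
            + (τ / 2 + 1 / (2 * r)) * (t - 0) ^ 2) = (β * |t| * r - a * t) / r := by
        simp only [abs_zero]
        field_simp
        ring
      have hnum : 0 ≤ β * |t| * r - a * t := by
        nlinarith [le_abs_self (a * t), abs_mul a t, abs_nonneg t]
      have : 0 ≤ (β * |t| * r - a * t) / r := div_nonneg hnum hr.le
      linarith
  have hk : 0 < τ / 2 + 1 / (2 * r) := by positivity
  constructor
  · intro t
    have h0 : 0 ≤ (τ / 2 + 1 / (2 * r)) * (t - s) ^ 2 := by positivity
    linarith [key t]
  · intro t ht
    have h1 := ht s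
    have h2 := key t
    have h3 : (τ / 2 + 1 / (2 * r)) * (t - s) ^ 2 ≤ 0 := by linarith
    have h4 : (t - s) ^ 2 = 0 := by nlinarith [sq_nonneg (t - s)]
    have h5 : t - s = 0 := by
      exact pow_eq_zero_iff two_ne_zero |>.mp h4
    linarith
end
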